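/- Let F be a field, let n ≥ 1, let x_1,…,x_n ∈ F be pairwise distinct, and let m ≥ n − 1 be an integer. Then ∑_{j=1}^{n} x_j^m / ∏_{k≠j}(x_j − x_k) = h_{m−n+1}(x_1,…,x_n), where h_{m−n+1} is the complete homogeneous symmetric polynomial of degree m−n+1 evaluated at (x_1,…,x_n). -/

import Mathlib

/-!
The left-hand side is the divided difference `f[x_1, …, x_n]` of `f = t ^ m`. Divided differences
satisfy `(t f)[x_1, …, x_n] = x_1 f[x_1, …, x_n] + f[x_2, …, x_n]`, which for `f = t ^ m` is the
recursion `h_{p+1}(x_1, …, x_n) = x_1 h_p(x_1, …, x_n) + h_{p+1}(x_2, …, x_n)` of the complete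
homogeneous polynomials. Induction on `n` and `m` then reduces the identity to the case
`m = n - 1`, where the divided difference is the leading coefficient `1` of the Lagrange
interpolant of `t ^ (n - 1)`.
-/

open Finset

theorem Finset.Nat.sum_antidiagonalTuple_succ {M : Type*} [AddCommMonoid M] (k p : ℕ)
    (f : (Fin (k + 1) → ℕ) → M) :
    ∑ d ∈ Nat.antidiagonalTuple (k + 1) p, f d =
      ∑ q ∈ antidiagonal p, ∑ e ∈ Nat.antidiagonalTuple k q.2, f (Fin.cons q.1 e) := by
  rw [sum_sigma']
  refine sum_nbij' (fun d => ⟨(d 0, ∑ i, Fin.tail d i), Fin.tail d⟩)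
    (fun q => Fin.cons q.1.1 q.2) ?_ ?_ ?_ ?_ ?_
  · simp [Nat.mem_antidiagonalTuple, Fin.sum_univ_succ, Fin.tail]
  · rintro ⟨⟨a, b⟩, e⟩
    simp +contextual [Nat.mem_antidiagonalTuple, Fin.sum_univ_succ]
  · simp
  · rintro ⟨⟨a, b⟩, e⟩ he
    simp_all [Nat.mem_antidiagonalTuple]
  · simp

theorem Fin.prod_univ_erase_succ {M : Type*} [CommMonoid M] {n : ℕ} (f : Fin (n + 1) → M)
    (i : Fin n) : ∏ k ∈ univ.erase i.succ, f k = f 0 * ∏ k ∈ univ.erase i, f k.succ := by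
  simp [← filter_ne', prod_filter, Fin.prod_univ_succ, (Fin.succ_ne_zero i).symm]

section CompleteHomogeneous

variable {R : Type*} [CommSemiring R] {n : ℕ}

def completeHomogeneous (x : Fin n → R) (p : ℕ) : R :=
  ∑ d ∈ Nat.antidiagonalTuple n p, ∏ i, x i ^ d i

@[simp]
theorem completeHomogeneous_zero (x : Fin n → R) : completeHomogeneous x 0 = 1 := by
  simp [completeHomogeneous, Nat.antidiagonalTuple_zero_right]

theorem completeHomogeneous_fin_succ (x : Fin (n + 1) → R) (p : ℕ) :
    completeHomogeneous x p =
      ∑ q ∈ antidiagonal p, x 0 ^ q.1 * completeHomogeneous (Fin.tail x) q.2 := by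
  simp only [completeHomogeneous, Nat.sum_antidiagonalTuple_succ, Fin.prod_univ_succ,
    Fin.cons_zero, Fin.cons_succ, mul_sum]
  rfl

theorem completeHomogeneous_succ (x : Fin (n + 1) → R) (p : ℕ) :
    completeHomogeneous x (p + 1) =
      x 0 * completeHomogeneous x p + completeHomogeneous (Fin.tail x) (p + 1) := by
  rw [completeHomogeneous_fin_succ, completeHomogeneous_fin_succ, Nat.sum_antidiagonal_succ,
    mul_sum, add_comm]
  simp only [pow_zero, one_mul, pow_succ', mul_assoc]

end CompleteHomogeneous

section DividedDifference

variable {F : Type*} [Field F] {n : ℕ}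

def dividedDifference (f : F → F) (x : Fin n → F) : F :=
  ∑ j, f (x j) / ∏ k ∈ univ.erase j, (x j - x k)

theorem dividedDifference_eval (x : Fin n → F) (hx : Function.Injective x) (P : Polynomial F)
    (hP : P.degree < n) : dividedDifference P.eval x = P.coeff (n - 1) := by
  simpa [dividedDifference] using
    (Lagrange.coeff_eq_sum (s := univ) hx.injOn (by simpa using hP)).symm

theorem dividedDifference_pow_self (x : Fin (n + 1) → F) (hx : Function.Injective x) :
    dividedDifference (· ^ n) x = 1 := by
  simpa using dividedDifference_eval x hx (Polynomial.X ^ n)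
    (by rw [Polynomial.degree_X_pow]; exact_mod_cast n.lt_succ_self)

theorem dividedDifference_id_mul (f : F → F) (x : Fin (n + 1) → F) (hx : Function.Injective x) :
    dividedDifference (fun t => t * f t) x =
      x 0 * dividedDifference f x + dividedDifference f (Fin.tail x) := by
  -- The factor `x j - x 0` vanishes for `j = 0` and cancels against the denominator otherwise.
  have split (j : Fin (n + 1)) (d : F) :
      x j * f (x j) / d = x 0 * (f (x j) / d) + (x j - x 0) * f (x j) / d := by ring
  simp only [dividedDifference, split, sum_add_distrib, ← mul_sum, add_right_inj]
  rw [Fin.sum_univ_succ, sub_self, zero_mul, zero_div, zero_add]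
  refine sum_congr rfl fun i _ => ?_
  rw [Fin.prod_univ_erase_succ, mul_div_mul_left _ _ (sub_ne_zero.mpr (hx.ne i.succ_ne_zero))]
  rfl

theorem dividedDifference_pow (x : Fin n → F) (hx : Function.Injective x) (m : ℕ)
    (hm : n - 1 ≤ m) : dividedDifference (· ^ m) x = completeHomogeneous x (m + 1 - n) := by
  induction n generalizing m with
  | zero => simp [dividedDifference, completeHomogeneous]
  | succ n ih =>
    replace hm : n ≤ m := by omega
    induction m, hm using Nat.le_induction with
    | base => rw [dividedDifference_pow_self x hx, Nat.sub_self, completeHomogeneous_zero]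
    | succ m hnm ihm =>
      have htail := ih (Fin.tail x) (hx.comp (Fin.succ_injective n)) m (by omega)
      have hpow : (· ^ (m + 1)) = fun t : F => t * t ^ m := funext fun t => pow_succ' t m
      rw [hpow, dividedDifference_id_mul _ x hx, ihm, htail,
        show m + 1 + 1 - (n + 1) = m - n + 1 by omega, show m + 1 - (n + 1) = m - n by omega,
        show m + 1 - n = m - n + 1 by omega, completeHomogeneous_succ]

end DividedDifference

theorem stmt5_general (F : Type*) [Field F] (n : ℕ) (x : Fin n → F)
    (hx : Function.Injective x) (m : ℕ) (hm : n - 1 ≤ m) :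
    ∑ j : Fin n, x j ^ m / ∏ k ∈ Finset.univ.erase j, (x j - x k) =
      ∑ d ∈ Finset.Nat.antidiagonalTuple n (m + 1 - n), ∏ i, x i ^ d i :=
  dividedDifference_pow x hx m hm

/-- For pairwise distinct `x_1, …, x_n` in a field `F` and `m ≥ n - 1`,
`∑_j x_j^m / ∏_{k ≠ j} (x_j - x_k) = h_{m-n+1}(x_1, …, x_n)`. -/
theorem stmt5 (F : Type*) [Field F] (n : ℕ) (hn : 1 ≤ n) (x : Fin n → F)
    (hx : Function.Injective x) (m : ℕ) (hm : n - 1 ≤ m) :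
    ∑ j : Fin n, x j ^ m / ∏ k ∈ Finset.univ.erase j, (x j - x k) =
      ∑ d ∈ Finset.Nat.antidiagonalTuple n (m + 1 - n), ∏ i, x i ^ d i :=
  stmt5_general F n x hx m hm
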